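/- Assume 2(1 + C·h(k)) ≤ 1 + C for every k ∉ {0,0'} with k ∼ 0 or k ∼ 0'. Let A_2 = {η ∈ Ω_n : η(0) = η(0') = 1} and ψ(η) = 1_{A_2^c}(η)·Π_{i∈Λ_n} γ_i^{η(i)}. Then for every β > 0, the function V(η) := (L_β^{n,ρ}ψ)(η)/ψ(η), defined for η ∉ A_2, is increasing on A_2^c: for all η ≤ ζ in Ω_n with η, ζ ∉ A_2, V(η) ≤ V(ζ). -/

import Mathlib

open scoped Classical
noncomputable section

/-- `Λ_n = [-n,n]^d ∩ ℤ^d`. -/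
def Lam (d n : ℕ) : Finset (Fin d → ℤ) :=
  Finset.Icc (fun _ => -(n : ℤ)) (fun _ => (n : ℤ))

/-- The sites of `Λ_n`. -/
abbrev Site (d n : ℕ) := {i : Fin d → ℤ // i ∈ Lam d n}

/-- `Ω_n = {0,1}^{Λ_n}` (with `Bool` for `{0,1}`, ordered by `false < true`). -/
abbrev Conf (d n : ℕ) := Site d n → Bool

/-- The nearest-neighbor relation on `ℤ^d`. -/
def Nbr {d : ℕ} (i j : Fin d → ℤ) : Prop := ∑ k, |i k - j k| = 1

/-- The origin, as a site of `Λ_n`. -/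
def site0 (d n : ℕ) : Site d n :=
  ⟨0, by simp [Lam, Finset.mem_Icc, Pi.le_def]⟩

/-- `T^{i,j}η` exchanges the coordinates `i` and `j` of `η`. -/
def exch {d n : ℕ} (i j : Site d n) (η : Conf d n) : Conf d n :=
  fun k => if k = i then η j else if k = j then η i else η k

/-- `σ^i η` flips the coordinate `i` of `η`. -/
def flp {d n : ℕ} (i : Site d n) (η : Conf d n) : Conf d n :=
  fun k => if k = i then !(η k) else η k

/-- `n(i) = #{j ∉ Λ_n : j ∼ i}` (each site of `ℤ^d` has exactly `2d` neighbors). -/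
def nOut {d n : ℕ} (i : Site d n) : ℤ :=
  2 * d - ((Lam d n).filter (fun j => Nbr i.1 j)).card

/-- `κ = √((1-ρ)/ρ)`. -/
def kap (ρ : ℝ) : ℝ := Real.sqrt ((1 - ρ) / ρ)

/-- `κ^{2η(i)-1}`. -/
def bdRate {d n : ℕ} (ρ : ℝ) (η : Conf d n) (i : Site d n) : ℝ :=
  kap ρ ^ (2 * (if η i then (1 : ℤ) else 0) - 1)

/-- The finite-volume SSEP generator with `ρ`-boundary:
`L^{n,ρ}φ(η) = Σ_{i∼j, i,j∈Λ_n}(φ(T^{i,j}η) − φ(η))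
             + Σ_{i∈∂Λ_n} n(i) κ^{2η(i)−1}(φ(σ^iη) − φ(η))`
(the sum over bonds `i ∼ j` is written as half the sum over ordered pairs). -/
def Lse {d n : ℕ} (ρ : ℝ) (φ : Conf d n → ℝ) (η : Conf d n) : ℝ :=
  (∑ i : Site d n, ∑ j : Site d n,
      if Nbr i.1 j.1 then φ (exch i j η) - φ η else 0) / 2
  + ∑ i : Site d n, (nOut i : ℝ) * bdRate ρ η i * (φ (flp i η) - φ η)

/-- `L_β^{n,ρ}φ = L^{n,ρ}φ + (β−1)(φ∘T^{0,0'} − φ)`, where `z'` plays the role of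
the fixed neighbor `0'` of the origin. -/
def Lbeta {d n : ℕ} (ρ β : ℝ) (z' : Site d n) (φ : Conf d n → ℝ) (η : Conf d n) : ℝ :=
  Lse ρ φ η + (β - 1) * (φ (exch (site0 d n) z' η) - φ η)

/-- The matrix of an operator on `Conf d n → ℝ` (entry `(η,ζ)` is the operator
applied to the indicator of `ζ`, evaluated at `η`). -/
def opMatrix {d n : ℕ} (Lop : (Conf d n → ℝ) → Conf d n → ℝ) :
    Matrix (Conf d n) (Conf d n) ℝ :=
  Matrix.of fun η ζ => Lop (fun ξ => if ξ = ζ then 1 else 0) η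

/-- The stopped matrix: rows indexed by `A` are replaced by zero rows. -/
def stopped {d n : ℕ} (A : Set (Conf d n)) (M : Matrix (Conf d n) (Conf d n) ℝ) :
    Matrix (Conf d n) (Conf d n) ℝ :=
  Matrix.of fun η ζ => if η ∈ A then 0 else M η ζ

/-- `P_η(τ_A > t) = (e^{t L̄} 1_{A^c})(η)`. -/
def surv {d n : ℕ} (A : Set (Conf d n)) (M : Matrix (Conf d n) (Conf d n) ℝ)
    (t : ℝ) (η : Conf d n) : ℝ :=
  (NormedSpace.exp (t • stopped A M)).mulVec (fun ζ => if ζ ∈ A then 0 else 1) η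

/-- The product Bernoulli(`ρ`) measure on `Ω_n`. -/
def nuRho {d n : ℕ} (ρ : ℝ) (η : Conf d n) : ℝ :=
  ∏ i, if η i then ρ else 1 - ρ

/-- The law at time `t` conditioned on survival, started from `ν_ρ`:
`T_t(ν_ρ)(φ) = [Σ_η ν_ρ(η)(e^{tL̄}(1_{A^c}φ))(η)] / [Σ_η ν_ρ(η)(e^{tL̄}1_{A^c})(η)]`. -/
def Tt {d n : ℕ} (ρ : ℝ) (A : Set (Conf d n)) (M : Matrix (Conf d n) (Conf d n) ℝ)
    (t : ℝ) (φ : Conf d n → ℝ) : ℝ :=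
  (∑ η, nuRho ρ η *
      (NormedSpace.exp (t • stopped A M)).mulVec
        (fun ζ => if ζ ∈ A then 0 else φ ζ) η) /
    ∑ η, nuRho ρ η * surv A M t η

/-- The set of nearest neighbors of `i` in `ℤ^d`, as a finset. -/
def nbrFinset {d : ℕ} (i : Fin d → ℤ) : Finset (Fin d → ℤ) :=
  (Finset.Icc (i - 1) (i + 1)).filter (fun j => Nbr i j)

/-- `γ_i = 1/(1 + C h(i))`. -/
def gam (C : ℝ) {d : ℕ} (h : (Fin d → ℤ) → ℝ) (i : Fin d → ℤ) : ℝ :=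
  1 / (1 + C * h i)

/-- `ψ(η) = 1_{A₂^c}(η) Π_{i ∈ Λ_n} γ_i^{η(i)}`, where `A₂ = {η : η(0) = η(0') = 1}`
and `z'` plays the role of `0'`. -/
def psiTwo (C : ℝ) {d n : ℕ} (h : (Fin d → ℤ) → ℝ) (z' : Site d n) (η : Conf d n) : ℝ :=
  (if η (site0 d n) = true ∧ η z' = true then 0 else 1) *
    ∏ i : Site d n, if η i then gam C h i.1 else 1

/-!
It suffices to compare `V(η)` with `V` after filling one empty site `k`. Off `A₂`, `ψ` is the
product weight `Π γ_i^{η(i)}` with `γ_i = 1/(1 + C h(i))`, so `V = L_βψ/ψ` is a sum over the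
jumps `η → ξ` of their rates times `ψ(ξ)/ψ(η) - 1`; filling `k` leaves the term of a jump not
involving `k` unchanged unless that jump starts or stops completing `A₂`.

If `k ∉ {0, 0'}`, each bond `{k, j}` gains at least `1 - γ_k/γ_j`: by `a/b + b/a ≥ 2`, or by
`2(1 + C h(k)) ≤ 1 + C` when the jump `k → j` would complete `A₂`. Harmonicity of
`γ⁻¹ = 1 + C h` sums these bounds to `-n(k)(1 - γ_k)`, which the change of the boundary flip
rates at `k` (from `κ⁻¹` to `κ`) outweighs.

If `k` is `0` or `0'`, every bond at `k` gains at least `1/2` and every bond at the other special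
site loses at most `1/2`; for `n ≥ 2` both sites have all their `2d` neighbours in `Λ_n`.

The bond `{0, 0'}` never contributes off `A₂` since `h(0) = h(0')`, so `β` plays no role.
-/

section General

theorem one_sub_div_le_div_sub_one {a b : ℝ} (ha : 0 < a) (hb : 0 < b) :
    1 - a / b ≤ b / a - 1 := by
  have : b / a - 1 - (1 - a / b) = (a - b) ^ 2 / (a * b) := by
    field_simp
    ring
  nlinarith [div_nonneg (sq_nonneg (a - b)) (mul_pos ha hb).le]

theorem one_sub_le_mul_inv_sub_one_sub_inv_mul {κ g : ℝ} (hκ : 0 < κ) (hg : 0 < g) (hg1 : g ≤ 1) :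
    1 - g ≤ κ * (g⁻¹ - 1) - κ⁻¹ * (g - 1) := by
  have hg' : 1 - g ≤ g⁻¹ - 1 := by simpa using one_sub_div_le_div_sub_one hg one_pos
  have hκ' : 1 - κ ≤ κ⁻¹ - 1 := by simpa using one_sub_div_le_div_sub_one hκ one_pos
  nlinarith [mul_le_mul_of_nonneg_left hg' hκ.le, mul_le_mul_of_nonneg_right hκ' (sub_nonneg.2 hg1)]

theorem sum_sum_eq_two_nsmul_of_symm {ι M : Type*} [Fintype ι] [DecidableEq ι]
    [AddCommMonoid M] (F : ι → ι → M) (S : Finset ι) (hsymm : ∀ i j, F i j = F j i)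
    (hS : ∀ i ∈ S, ∀ j ∈ S, F i j = 0) (hSc : ∀ i ∉ S, ∀ j ∉ S, F i j = 0) :
    ∑ i, ∑ j, F i j = 2 • ∑ i ∈ S, ∑ j, F i j := by
  have hin : ∀ i ∈ S, ∑ j, F i j = ∑ j ∈ Sᶜ, F i j := fun i hi => by
    rw [← Finset.sum_compl_add_sum S, Finset.sum_eq_zero fun j hj => hS i hi j hj, add_zero]
  have hout : ∀ i ∉ S, ∑ j, F i j = ∑ j ∈ S, F j i := fun i hi => by
    rw [← Finset.sum_compl_add_sum S, Finset.sum_eq_zero fun j hj =>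
      hSc i hi j (Finset.mem_compl.mp hj), zero_add]
    exact Finset.sum_congr rfl fun j _ => hsymm i j
  rw [← Finset.sum_compl_add_sum S,
    Finset.sum_congr rfl fun i hi => hout i (Finset.mem_compl.mp hi), Finset.sum_comm, ← Finset.sum_congr rfl hin, two_nsmul]

theorem monotoneOn_of_le_update {ι α : Type*} [Fintype ι] [DecidableEq ι] [Preorder α]
    {S : Set (ι → Bool)} (hS : IsLowerSet S) {f : (ι → Bool) → α}
    (hf : ∀ η k, η k = false → Function.update η k true ∈ S → f η ≤ f (Function.update η k true)) :
    MonotoneOn f S := by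
  intro η _ ζ hζ hle
  suffices ∀ s : Finset ι, ∀ η ≤ ζ, (∀ i ∉ s, η i = ζ i) → f η ≤ f ζ from
    this Finset.univ η hle fun i hi => absurd (Finset.mem_univ i) hi
  intro s
  induction s using Finset.induction_on with
  | empty =>
    exact fun η _ heq => le_of_eq (congrArg f (funext fun i => heq i (Finset.notMem_empty i)))
  | insert k s _ ih =>
    intro η hle heq
    by_cases hk : η k = ζ k
    · exact ih η hle fun i hi => by
        by_cases hik : i = k
        · exact hik ▸ hk
        · exact heq i (by simp [hik, hi])
    obtain ⟨hηk, hζk⟩ : η k = false ∧ ζ k = true := by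
      have := hle k
      cases hη : η k <;> cases hζ : ζ k <;> simp_all [Bool.le_iff_imp]
    have hupd : Function.update η k true ≤ ζ := by
      intro i
      by_cases hik : i = k
      · subst hik; simp [hζk]
      · simpa [hik] using hle i
    refine (hf η k hηk (hS hupd hζ)).trans (ih _ hupd fun i hi => ?_)
    by_cases hik : i = k
    · subst hik; simpa [hηk] using hk
    · simpa [hik] using heq i (by simp [hik, hi])

end General

section Lattice

variable {d : ℕ}

theorem Nbr.symm {i j : Fin d → ℤ} (h : Nbr i j) : Nbr j i := by
  simpa only [Nbr, abs_sub_comm] using h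

theorem nbr_irrefl (i : Fin d → ℤ) : ¬Nbr i i := by
  simp [Nbr]

theorem Nbr.ne {i j : Fin d → ℤ} (h : Nbr i j) : i ≠ j := by
  rintro rfl
  exact nbr_irrefl i h

theorem nbr_iff {i j : Fin d → ℤ} :
    Nbr i j ↔ ∃ m, ∃ s ∈ ({1, -1} : Finset ℤ), j = i + Pi.single m s := by
  constructor
  · intro h
    obtain ⟨m, hm⟩ : ∃ m, i m ≠ j m := by
      by_contra! hij
      simp [Nbr, hij] at h
    have hsplit := Finset.add_sum_erase Finset.univ (fun m => |i m - j m|) (Finset.mem_univ m)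
    rw [show ∑ m, |i m - j m| = 1 from h] at hsplit
    have hrest :=
      Finset.sum_nonneg fun m' (_ : m' ∈ Finset.univ.erase m) => abs_nonneg (i m' - j m')
    have hm1 : |i m - j m| = 1 := by
      have := Int.one_le_abs (sub_ne_zero.mpr hm)
      omega
    have heq : ∀ m' ≠ m, i m' = j m' := fun m' hm' => by
      have := (Finset.sum_eq_zero_iff_of_nonneg fun m' _ => abs_nonneg (i m' - j m')).mp
        (by omega) m' (Finset.mem_erase.mpr ⟨hm', Finset.mem_univ _⟩)
      exact sub_eq_zero.mp (abs_eq_zero.mp this)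
    refine ⟨m, j m - i m, ?_, funext fun m' => ?_⟩
    · rcases abs_eq (zero_le_one' ℤ) |>.mp hm1 with h1 | h1 <;> simp <;> omega
    · by_cases hm' : m' = m
      · subst hm'; simp
      · simp [hm', heq m' hm']
  · rintro ⟨m, s, hs, rfl⟩
    have hs1 : |s| = 1 := by rcases Finset.mem_insert.mp hs with rfl | hs <;> simp_all
    simp only [Nbr, Pi.add_apply, sub_add_cancel_left, abs_neg]
    rw [← hs1, ← Fintype.sum_pi_single' m |s|]
    refine Finset.sum_congr rfl fun m' _ => ?_
    by_cases hm' : m' = m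
    · subst hm'; simp
    · simp [hm']

theorem nbrFinset_eq_image (i : Fin d → ℤ) :
    nbrFinset i = (Finset.univ ×ˢ ({1, -1} : Finset ℤ)).image
      (fun p => i + Pi.single p.1 p.2) := by
  ext j
  simp only [nbrFinset, Finset.mem_filter, Finset.mem_Icc, Finset.mem_image, Finset.mem_product,
    Finset.mem_univ, true_and, Prod.exists]
  constructor
  · rintro ⟨-, h⟩
    obtain ⟨m, s, hs, rfl⟩ := nbr_iff.mp h
    exact ⟨m, s, hs, rfl⟩
  · rintro ⟨m, s, hs, rfl⟩
    refine ⟨⟨fun m' => ?_, fun m' => ?_⟩, nbr_iff.mpr ⟨m, s, hs, rfl⟩⟩ <;>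
    · by_cases hm' : m' = m
      · subst hm'
        simp only [Finset.mem_insert, Finset.mem_singleton] at hs
        rcases hs with rfl | rfl <;> simp <;> omega
      · simp [hm']

theorem mem_nbrFinset {i j : Fin d → ℤ} : j ∈ nbrFinset i ↔ Nbr i j := by
  rw [nbrFinset_eq_image, Finset.mem_image, nbr_iff]
  simp [eq_comm]

theorem card_nbrFinset (i : Fin d → ℤ) : (nbrFinset i).card = 2 * d := by
  rw [nbrFinset_eq_image, Finset.card_image_of_injOn, Finset.card_product]
  · simp [mul_comm]
  rintro ⟨m, s⟩ hs ⟨m', s'⟩ hs' he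
  simp only [Finset.coe_product, Set.mem_prod, Finset.coe_insert, Finset.coe_singleton,
    Set.mem_insert_iff, Set.mem_singleton_iff] at hs hs' he
  have he := add_left_cancel he
  have hm : m = m' := by
    by_contra hm
    have := congrFun he m
    simp [hm] at this
    omega
  subst hm
  simpa using congrFun he m

end Lattice

section Box

variable {d n : ℕ}

theorem Nbr.abs_sub_le_one {i j : Fin d → ℤ} (h : Nbr i j) (m : Fin d) : |i m - j m| ≤ 1 :=
  h ▸ Finset.single_le_sum (fun m _ => abs_nonneg (i m - j m)) (Finset.mem_univ m)

theorem Nbr.mem_Lam (hn : 2 ≤ n) {i j : Fin d → ℤ} (hi : ∀ m, |i m| ≤ 1) (h : Nbr i j) :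
    j ∈ Lam d n := by
  simp only [Lam, Finset.mem_Icc, Pi.le_def]
  have hi' := fun m => abs_le.mp (hi m)
  have hij := fun m => abs_le.mp (h.abs_sub_le_one m)
  exact ⟨fun m => by grind, fun m => by grind⟩

theorem filter_Lam_nbr (i : Fin d → ℤ) :
    (Lam d n).filter (Nbr i) = (nbrFinset i).filter (· ∈ Lam d n) := by
  ext j
  simp only [Finset.mem_filter, mem_nbrFinset, and_comm]

theorem nOut_eq_card (i : Site d n) :
    nOut i = ((nbrFinset i.1).filter (· ∉ Lam d n)).card := by
  have := Finset.card_filter_add_card_filter_not (s := nbrFinset i.1) (· ∈ Lam d n)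
  rw [card_nbrFinset] at this
  rw [nOut, filter_Lam_nbr]
  omega

theorem nOut_eq_zero {i : Site d n} (hi : ∀ j, Nbr i.1 j → j ∈ Lam d n) : nOut i = 0 := by
  rw [nOut_eq_card, Nat.cast_eq_zero, Finset.card_eq_zero, Finset.filter_eq_empty_iff]
  exact fun j hj => not_not.mpr (hi j (mem_nbrFinset.mp hj))

theorem sum_site_nbr {M : Type*} [AddCommMonoid M] (i : Fin d → ℤ) (f : (Fin d → ℤ) → M) :
    ∑ j : Site d n, (if Nbr i j.1 then f j.1 else 0) =
      ∑ j ∈ (nbrFinset i).filter (· ∈ Lam d n), f j := by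
  rw [← filter_Lam_nbr, Finset.sum_filter]
  exact Finset.sum_coe_sort (Lam d n) fun j => if Nbr i j then f j else 0

theorem sum_site_nbr_const {i : Fin d → ℤ} (hi : ∀ j, Nbr i j → j ∈ Lam d n) (c : ℝ) :
    ∑ j : Site d n, (if Nbr i j.1 then c else 0) = 2 * d * c := by
  rw [sum_site_nbr i fun _ => c, Finset.filter_true_of_mem fun j hj => hi j (mem_nbrFinset.mp hj)]
  simp [card_nbrFinset]

theorem sum_site_nbr_one_sub_div {γ : (Fin d → ℤ) → ℝ} {k : Site d n} (hk : γ k.1 ≠ 0)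
    (hout : ∀ j ∉ Lam d n, γ j = 1)
    (hharm : 2 * d * (γ k.1)⁻¹ = ∑ j ∈ nbrFinset k.1, (γ j)⁻¹) :
    ∑ j : Site d n, (if Nbr k.1 j.1 then 1 - γ k.1 / γ j.1 else 0) =
      -(nOut k * (1 - γ k.1)) := by
  have htotal : ∑ j ∈ nbrFinset k.1, (1 - γ k.1 / γ j) = 0 := by
    simp only [div_eq_mul_inv, Finset.sum_sub_distrib, ← Finset.mul_sum, ← hharm,
      Finset.sum_const, card_nbrFinset, nsmul_eq_mul, mul_one]
    field_simp
    push_cast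
    ring
  have hexterior : ∑ j ∈ (nbrFinset k.1).filter (· ∉ Lam d n), (1 - γ k.1 / γ j) =
      ((nbrFinset k.1).filter (· ∉ Lam d n)).card * (1 - γ k.1) := by
    rw [Finset.sum_congr rfl fun j hj => by rw [hout j (Finset.mem_filter.mp hj).2, div_one],
      Finset.sum_const, nsmul_eq_mul]
  rw [← Finset.sum_filter_add_sum_filter_not _ (· ∈ Lam d n), hexterior] at htotal
  rw [sum_site_nbr k.1 (fun j => 1 - γ k.1 / γ j), nOut_eq_card]
  push_cast
  linarith

end Box

namespace SSEP

open Function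

variable {d n : ℕ}

section Configurations

def A2 (z' : Site d n) : Set (Conf d n) := {η | η (site0 d n) = true ∧ η z' = true}

theorem mem_A2 {z' : Site d n} {η : Conf d n} :
    η ∈ A2 z' ↔ η (site0 d n) = true ∧ η z' = true := Iff.rfl

theorem isUpperSet_A2 (z' : Site d n) : IsUpperSet (A2 z') := by
  rintro η ζ hle ⟨h0, hz⟩
  exact ⟨le_antisymm (Bool.le_true _) (h0 ▸ hle _), le_antisymm (Bool.le_true _) (hz ▸ hle _)⟩

theorem exch_apply_left (i j : Site d n) (η : Conf d n) : exch i j η i = η j := if_pos rfl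

theorem exch_apply_right (i j : Site d n) (η : Conf d n) : exch i j η j = η i := by
  by_cases h : j = i
  · subst h; exact exch_apply_left j j η
  · simp [exch, h]

theorem exch_apply_of_ne {i j x : Site d n} (hi : x ≠ i) (hj : x ≠ j) (η : Conf d n) :
    exch i j η x = η x := by
  simp [exch, hi, hj]

theorem exch_comm (i j : Site d n) (η : Conf d n) : exch i j η = exch j i η := by
  funext x
  unfold exch
  split_ifs <;> simp_all

theorem exch_eq_self {i j : Site d n} {η : Conf d n} (h : η i = η j) : exch i j η = η := by
  funext x
  unfold exch
  split_ifs <;> simp_all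

theorem exch_eq_update {i j : Site d n} (hij : i ≠ j) (η : Conf d n) :
    exch i j η = update (update η i (η j)) j (η i) := by
  funext x
  by_cases hj : x = j
  · subst hj; simp [exch, hij.symm]
  · by_cases hi : x = i
    · subst hi; simp [exch, hij]
    · simp [exch, hi, hj]

theorem exch_update_of_ne {i j k : Site d n} (hi : k ≠ i) (hj : k ≠ j) (η : Conf d n)
    (b : Bool) : exch i j (update η k b) = update (exch i j η) k b := by
  funext x
  by_cases hx : x = k
  · subst hx; simp [exch, hi, hj]
  · unfold exch
    split_ifs <;> simp_all [Ne.symm]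

theorem flp_apply_of_ne {i x : Site d n} (h : x ≠ i) (η : Conf d n) : flp i η x = η x :=
  if_neg h

theorem flp_eq_update (i : Site d n) (η : Conf d n) : flp i η = update η i !η i := by
  funext x
  by_cases hx : x = i
  · subst hx; simp [flp]
  · simp [flp, hx]

theorem flp_update_of_ne {i k : Site d n} (h : k ≠ i) (η : Conf d n) (b : Bool) :
    flp i (update η k b) = update (flp i η) k b := by
  rw [flp_eq_update, flp_eq_update, update_of_ne h.symm, update_comm h]

end Configurations

section Weight

variable {γ : (Fin d → ℤ) → ℝ}

def weight (γ : (Fin d → ℤ) → ℝ) (η : Conf d n) : ℝ := ∏ i, if η i then γ i.1 else 1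

def psi (γ : (Fin d → ℤ) → ℝ) (z' : Site d n) (η : Conf d n) : ℝ :=
  (if η (site0 d n) = true ∧ η z' = true then 0 else 1) * weight γ η

theorem psiTwo_eq_psi (C : ℝ) (h : (Fin d → ℤ) → ℝ) (z' : Site d n) :
    psiTwo C h z' = psi (gam C h) z' := rfl

theorem psi_of_mem {z' : Site d n} {η : Conf d n} (hη : η ∈ A2 z') : psi γ z' η = 0 := by
  rw [psi, if_pos (mem_A2.mp hη), zero_mul]

theorem psi_of_notMem {z' : Site d n} {η : Conf d n} (hη : η ∉ A2 z') :
    psi γ z' η = weight γ η := by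
  rw [psi, if_neg (mt mem_A2.mpr hη), one_mul]

theorem weight_pos (hγ : ∀ i, 0 < γ i) (η : Conf d n) : 0 < weight γ η :=
  Finset.prod_pos fun i _ => by split <;> simp [hγ]

theorem weight_update (η : Conf d n) (k : Site d n) (b : Bool) :
    weight γ (update η k b) * (if η k then γ k.1 else 1) =
      (if b then γ k.1 else 1) * weight γ η := by
  let w : Site d n → Bool → ℝ := fun i b => if b then γ i.1 else 1
  have hupd : weight γ (update η k b) =
      ∏ i, update (fun i => w i (η i)) k (w k b) i :=
    Finset.prod_congr rfl fun i _ => apply_update w η k b i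
  rw [hupd, Finset.prod_update_of_mem (Finset.mem_univ k), weight,
    Finset.prod_eq_mul_prod_sdiff_singleton k _ fun hk => (hk (Finset.mem_univ k)).elim]
  ring

theorem weight_update_true {η : Conf d n} {k : Site d n} (hk : η k = false) :
    weight γ (update η k true) = γ k.1 * weight γ η := by
  simpa [hk] using weight_update (γ := γ) η k true

theorem weight_exch {η : Conf d n} {i j : Site d n} (hi : η i = true) (hj : η j = false) :
    weight γ (exch i j η) * γ i.1 = γ j.1 * weight γ η := by
  have hij : i ≠ j := fun h => by simp [h, hj] at hi
  have h1 := weight_update (γ := γ) η i false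
  have h2 := weight_update (γ := γ) (update η i false) j true
  rw [update_of_ne hij.symm, hj] at h2
  simp only [hi, if_true, if_false, Bool.false_eq_true, one_mul, mul_one] at h1 h2
  rw [exch_eq_update hij, hi, hj, h2, mul_assoc, h1]

end Weight

section Jumps

variable {γ : (Fin d → ℤ) → ℝ} {z' : Site d n}

/-- For `η ∉ A₂` this is `ψ(ξ)/ψ(η) - 1`, the factor of the rate of a jump `η → ξ` in `Lψ/ψ`. -/
def relJump (γ : (Fin d → ℤ) → ℝ) (z' : Site d n) (η ξ : Conf d n) : ℝ :=
  psi γ z' ξ / weight γ η - 1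

theorem relJump_of_mem {η ξ : Conf d n} (hξ : ξ ∈ A2 z') : relJump γ z' η ξ = -1 := by
  rw [relJump, psi_of_mem hξ, zero_div, zero_sub]

theorem relJump_self (hγ : ∀ i, 0 < γ i) {η : Conf d n} (hη : η ∉ A2 z') :
    relJump γ z' η η = 0 := by
  rw [relJump, psi_of_notMem hη, div_self (weight_pos hγ η).ne', sub_self]

theorem relJump_exch (hγ : ∀ i, 0 < γ i) {η : Conf d n} {i j : Site d n} (hi : η i = true)
    (hj : η j = false) (hexch : exch i j η ∉ A2 z') :
    relJump γ z' η (exch i j η) = γ j.1 / γ i.1 - 1 := by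
  rw [relJump, psi_of_notMem hexch, sub_left_inj,
    div_eq_div_iff (weight_pos hγ η).ne' (hγ i.1).ne', weight_exch hi hj]

theorem relJump_update_update (hγ : ∀ i, 0 < γ i) {η τ : Conf d n} {k : Site d n}
    (hηk : η k = false) (hτk : τ k = false)
    (hmem : update τ k true ∈ A2 z' ↔ τ ∈ A2 z') :
    relJump γ z' (update η k true) (update τ k true) = relJump γ z' η τ := by
  have hpsi : psi γ z' (update τ k true) = γ k.1 * psi γ z' τ := by
    by_cases hτ : τ ∈ A2 z'
    · rw [psi_of_mem hτ, psi_of_mem (hmem.mpr hτ), mul_zero]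
    · rw [psi_of_notMem hτ, psi_of_notMem (mt hmem.mp hτ), weight_update_true hτk]
  rw [relJump, relJump, hpsi, weight_update_true hηk, mul_div_mul_left _ _ (hγ k.1).ne']

theorem relJump_exch_special (hγ : ∀ i, 0 < γ i) {u v : Site d n}
    (hA : ∀ σ : Conf d n, σ ∈ A2 z' ↔ σ u = true ∧ σ v = true) (hγuv : γ u.1 = γ v.1)
    {σ : Conf d n} (hσ : σ ∉ A2 z') : relJump γ z' σ (exch u v σ) = 0 := by
  by_cases hs : σ u = σ v
  · rw [exch_eq_self hs, relJump_self hγ hσ]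
  cases hu : σ u <;> cases hv : σ v <;> simp only [hu, hv, not_true_eq_false] at hs
  · rw [exch_comm, relJump_exch hγ hv hu, hγuv, div_self (hγ v.1).ne', sub_self]
    simp [hA, exch_apply_left, hu]
  · rw [relJump_exch hγ hu hv, hγuv, div_self (hγ v.1).ne', sub_self]
    simp [hA, exch_apply_left, hv]

end Jumps

section Potential

variable {γ : (Fin d → ℤ) → ℝ} {z' : Site d n}

def bondJump (γ : (Fin d → ℤ) → ℝ) (z' : Site d n) (η : Conf d n) (i j : Site d n) : ℝ :=
  if Nbr i.1 j.1 then relJump γ z' η (exch i j η) else 0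

def bulkJump (γ : (Fin d → ℤ) → ℝ) (z' : Site d n) (η : Conf d n) : ℝ :=
  ∑ i, ∑ j, bondJump γ z' η i j

def boundaryJump (ρ : ℝ) (γ : (Fin d → ℤ) → ℝ) (z' : Site d n) (η : Conf d n) : ℝ :=
  ∑ i, (nOut i : ℝ) * bdRate ρ η i * relJump γ z' η (flp i η)

/-- `V = L_βψ/ψ` on `A₂ᶜ`, written jump by jump. -/
def potential (ρ β : ℝ) (γ : (Fin d → ℤ) → ℝ) (z' : Site d n) (η : Conf d n) : ℝ :=
  bulkJump γ z' η / 2 + boundaryJump ρ γ z' η +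
    (β - 1) * relJump γ z' η (exch (site0 d n) z' η)

theorem Lbeta_psi_div_psi (hγ : ∀ i, 0 < γ i) (ρ β : ℝ) {η : Conf d n} (hη : η ∉ A2 z') :
    Lbeta ρ β z' (psi γ z') η / psi γ z' η = potential ρ β γ z' η := by
  have hw := (weight_pos hγ η).ne'
  have hjump : ∀ ξ, (psi γ z' ξ - weight γ η) / weight γ η = relJump γ z' η ξ := fun ξ => by
    rw [relJump, sub_div, div_self hw]
  simp only [Lbeta, Lse, potential, bulkJump, boundaryJump, bondJump, psi_of_notMem hη,
    add_div, mul_div_assoc, hjump, div_right_comm _ (2 : ℝ), Finset.sum_div, ite_div, zero_div]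

end Potential

section Bonds

variable {γ : (Fin d → ℤ) → ℝ} {z' : Site d n} {η : Conf d n} {k : Site d n}

theorem notMem_A2_of_le {σ τ : Conf d n} (h : σ ≤ τ) (hτ : τ ∉ A2 z') : σ ∉ A2 z' :=
  fun hσ => hτ (isUpperSet_A2 z' h hσ)

theorem le_update_true (η : Conf d n) (k : Site d n) : η ≤ update η k true :=
  le_update_iff.mpr ⟨Bool.le_true _, fun _ _ => le_rfl⟩

theorem exch_le_update_true (hk : η k = false) (j : Site d n) : exch k j η ≤ update η k true := by
  intro x
  by_cases hxk : x = k
  · subst hxk; simp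
  · by_cases hxj : x = j
    · subst hxj; simp [hxk, exch_apply_right, hk]
    · simp [hxk, exch_apply_of_ne hxk hxj]

theorem update_mem_A2_iff (hk0 : k ≠ site0 d n) (hkz : k ≠ z') (σ : Conf d n) (b : Bool) :
    update σ k b ∈ A2 z' ↔ σ ∈ A2 z' := by
  simp only [mem_A2, update_of_ne hk0.symm, update_of_ne hkz.symm]

theorem relJump_exch_update_sub_of_true (hγ : ∀ i, 0 < γ i) (hk : η k = false)
    (hξ : update η k true ∉ A2 z') {j : Site d n} (hjk : j ≠ k) (hj : η j = true) :
    relJump γ z' (update η k true) (exch k j (update η k true)) -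
      relJump γ z' η (exch k j η) = 1 - γ k.1 / γ j.1 := by
  have hexch : exch j k η ∉ A2 z' := exch_comm k j η ▸ notMem_A2_of_le (exch_le_update_true hk j) hξ
  rw [exch_eq_self (by simp [hjk, hj]), relJump_self hγ hξ, exch_comm,
    relJump_exch hγ hj hk hexch]
  ring

theorem relJump_exch_update_sub_of_false (hγ : ∀ i, 0 < γ i) (hk : η k = false)
    (hξ : update η k true ∉ A2 z') {j : Site d n} (hjk : j ≠ k) (hj : η j = false)
    (hexch : exch k j (update η k true) ∉ A2 z') :
    relJump γ z' (update η k true) (exch k j (update η k true)) -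
      relJump γ z' η (exch k j η) = γ j.1 / γ k.1 - 1 := by
  rw [exch_eq_self (hk.trans hj.symm), relJump_self hγ (notMem_A2_of_le (le_update_true η k) hξ),
    relJump_exch hγ (update_self k true η) (by rwa [update_of_ne hjk]) hexch, sub_zero]

theorem relJump_exch_update_sub_of_mem (hγ : ∀ i, 0 < γ i) (hk : η k = false)
    (hξ : update η k true ∉ A2 z') {j : Site d n} (hj : η j = false)
    (hexch : exch k j (update η k true) ∈ A2 z') :
    relJump γ z' (update η k true) (exch k j (update η k true)) -
      relJump γ z' η (exch k j η) = -1 := by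
  rw [exch_eq_self (hk.trans hj.symm), relJump_self hγ (notMem_A2_of_le (le_update_true η k) hξ),
    relJump_of_mem hexch, sub_zero]

theorem one_sub_div_le_relJump_exch_update_sub (hγ : ∀ i, 0 < γ i) (hk0 : k ≠ site0 d n)
    (hkz : k ≠ z') (hk : η k = false) (hξ : update η k true ∉ A2 z')
    {j : Site d n} (hkj : Nbr k.1 j.1) (hsp : (j = site0 d n ∨ j = z') → 2 * γ j.1 ≤ γ k.1) :
    1 - γ k.1 / γ j.1 ≤ relJump γ z' (update η k true) (exch k j (update η k true)) -
      relJump γ z' η (exch k j η) := by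
  have hjk : j ≠ k := fun h => hkj.ne (congrArg Subtype.val h).symm
  cases hj : η j
  · by_cases hexch : exch k j (update η k true) ∈ A2 z'
    · rw [relJump_exch_update_sub_of_mem hγ hk hξ hj hexch]
      -- the jump `k → j` completes `A₂`, so it fills `0` or `0'`
      have hspecial : j = site0 d n ∨ j = z' := by
        by_contra! hne
        refine notMem_A2_of_le (le_update_true η k) hξ ?_
        simpa [mem_A2, exch_apply_of_ne, hk0.symm, hkz.symm, hne.1.symm, hne.2.symm,
          update_of_ne] using hexch
      have := (le_div_iff₀ (hγ j.1)).mpr (hsp hspecial)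
      linarith
    · rw [relJump_exch_update_sub_of_false hγ hk hξ hjk hj hexch]
      exact one_sub_div_le_div_sub_one (hγ k.1) (hγ j.1)
  · rw [relJump_exch_update_sub_of_true hγ hk hξ hjk hj]

theorem half_le_relJump_exch_update_sub (hγ : ∀ i, 0 < γ i) {u v : Site d n}
    (hA : ∀ σ : Conf d n, σ ∈ A2 z' ↔ σ u = true ∧ σ v = true) (huv : u ≠ v)
    (hu : η u = false) (hv : η v = false) (hξ : update η u true ∉ A2 z') {j : Site d n}
    (hju : j ≠ u) (hjv : j ≠ v) (hsp : 2 * γ u.1 ≤ γ j.1) :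
    1 / 2 ≤ relJump γ z' (update η u true) (exch u j (update η u true)) -
      relJump γ z' η (exch u j η) := by
  cases hj : η j
  · have hexch : exch u j (update η u true) ∉ A2 z' := by
      simp [hA, exch_apply_of_ne huv.symm hjv.symm, update_of_ne huv.symm, hv]
    rw [relJump_exch_update_sub_of_false hγ hu hξ hju hj hexch]
    have := (le_div_iff₀ (hγ u.1)).mpr hsp
    linarith
  · rw [relJump_exch_update_sub_of_true hγ hu hξ hju hj]
    have := (div_le_iff₀ (hγ j.1)).mpr (by linarith : γ u.1 ≤ 1 / 2 * γ j.1)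
    linarith

theorem neg_half_le_relJump_exch_update_sub (hγ : ∀ i, 0 < γ i) {u v : Site d n}
    (hA : ∀ σ : Conf d n, σ ∈ A2 z' ↔ σ u = true ∧ σ v = true) (huv : u ≠ v)
    (hu : η u = false) (hv : η v = false) (hξ : update η u true ∉ A2 z') {j : Site d n}
    (hju : j ≠ u) (hsp : 2 * γ v.1 ≤ γ j.1) :
    -(1 / 2) ≤ relJump γ z' (update η u true) (exch v j (update η u true)) -
      relJump γ z' η (exch v j η) := by
  have hη := notMem_A2_of_le (le_update_true η u) hξ
  cases hj : η j
  · rw [exch_eq_self (hv.trans hj.symm), exch_eq_self (by simp [huv.symm, hju, hv, hj]),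
      relJump_self hγ hξ, relJump_self hγ hη]
    norm_num
  · have hkill : exch v j (update η u true) ∈ A2 z' := by
      simp [hA, exch_apply_of_ne huv hju.symm, exch_apply_left, hju, hj]
    have hexch : exch j v η ∉ A2 z' := by
      simp [hA, exch_apply_of_ne hju.symm huv, hu]
    rw [relJump_of_mem hkill, exch_comm, relJump_exch hγ hj hv hexch]
    have := (div_le_iff₀ (hγ j.1)).mpr (by linarith : γ v.1 ≤ 1 / 2 * γ j.1)
    linarith

end Bonds

section Step

variable {γ : (Fin d → ℤ) → ℝ} {z' : Site d n} {η : Conf d n} {k : Site d n}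

theorem bondJump_comm (η : Conf d n) (i j : Site d n) :
    bondJump γ z' η i j = bondJump γ z' η j i := by
  by_cases h : Nbr i.1 j.1
  · rw [bondJump, bondJump, if_pos h, if_pos h.symm, exch_comm]
  · rw [bondJump, bondJump, if_neg h, if_neg fun h' => h h'.symm]

theorem bondJump_update_of_ne (hγ : ∀ i, 0 < γ i) (hk : η k = false) {i j : Site d n}
    (hi : k ≠ i) (hj : k ≠ j)
    (hmem : update (exch i j η) k true ∈ A2 z' ↔ exch i j η ∈ A2 z') :
    bondJump γ z' (update η k true) i j = bondJump γ z' η i j := by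
  rw [bondJump, bondJump, exch_update_of_ne hi hj,
    relJump_update_update hγ hk (by rwa [exch_apply_of_ne hi hj]) hmem]

theorem boundaryTerm_update_of_ne (hγ : ∀ i, 0 < γ i) (ρ : ℝ) (hk : η k = false)
    {i : Site d n} (hi : k ≠ i) (hmem : update (flp i η) k true ∈ A2 z' ↔ flp i η ∈ A2 z') :
    (nOut i : ℝ) * bdRate ρ (update η k true) i *
        relJump γ z' (update η k true) (flp i (update η k true)) =
      nOut i * bdRate ρ η i * relJump γ z' η (flp i η) := by
  rw [flp_update_of_ne hi, relJump_update_update hγ hk (by rwa [flp_apply_of_ne hi]) hmem,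
    bdRate, bdRate, update_of_ne hi.symm]

theorem bulkJump_sub (η ξ : Conf d n) :
    bulkJump γ z' ξ - bulkJump γ z' η = ∑ i, ∑ j, (bondJump γ z' ξ i j - bondJump γ z' η i j) := by
  simp only [bulkJump, Finset.sum_sub_distrib]

theorem bulkJump_update_sub_ge (hγ : ∀ i, 0 < γ i) (hk0 : k ≠ site0 d n) (hkz : k ≠ z')
    (hk : η k = false) (hξ : update η k true ∉ A2 z')
    (hsp : ∀ j : Site d n, Nbr k.1 j.1 → (j = site0 d n ∨ j = z') → 2 * γ j.1 ≤ γ k.1) :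
    2 * ∑ j : Site d n, (if Nbr k.1 j.1 then 1 - γ k.1 / γ j.1 else 0) ≤
      bulkJump γ z' (update η k true) - bulkJump γ z' η := by
  rw [bulkJump_sub, sum_sum_eq_two_nsmul_of_symm _ {k}
      (fun i j => by rw [bondJump_comm _ i, bondJump_comm η i])
      (fun i hi j hj => by simp_all [bondJump, nbr_irrefl])
      (fun i hi j hj => sub_eq_zero.mpr (bondJump_update_of_ne hγ hk (Ne.symm (by simpa using hi))
        (Ne.symm (by simpa using hj)) (update_mem_A2_iff hk0 hkz _ _))),
    Finset.sum_singleton, two_nsmul, ← two_mul]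
  gcongr with j
  by_cases hkj : Nbr k.1 j.1
  · simp only [bondJump, if_pos hkj]
    exact one_sub_div_le_relJump_exch_update_sub hγ hk0 hkz hk hξ hkj (hsp j hkj)
  · simp [bondJump, hkj]

section Special

variable {u v : Site d n}

theorem apply_eq_false_of_update_notMem
    (hA : ∀ σ : Conf d n, σ ∈ A2 z' ↔ σ u = true ∧ σ v = true) (huv : u ≠ v)
    (hξ : update η u true ∉ A2 z') : η v = false := by
  by_contra h
  exact hξ ((hA _).mpr ⟨update_self u true η, by simpa [huv.symm] using h⟩)

theorem bondJump_update_sub_ge_of_special (hγ : ∀ i, 0 < γ i)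
    (hA : ∀ σ : Conf d n, σ ∈ A2 z' ↔ σ u = true ∧ σ v = true) (hγuv : γ u.1 = γ v.1)
    (huv : u ≠ v) (hu : η u = false) (hv : η v = false) (hξ : update η u true ∉ A2 z')
    (hsp : ∀ j : Site d n, j ≠ u → j ≠ v → Nbr u.1 j.1 → 2 * γ u.1 ≤ γ j.1) (j : Site d n) :
    (if Nbr u.1 j.1 then 1 / 2 else 0) - (if j = v then 1 / 2 else 0) ≤
      bondJump γ z' (update η u true) u j - bondJump γ z' η u j := by
  by_cases hN : Nbr u.1 j.1
  · by_cases hjv : j = v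
    · subst hjv
      simp only [bondJump, if_pos hN, if_true, relJump_exch_special hγ hA hγuv hξ,
        relJump_exch_special hγ hA hγuv (notMem_A2_of_le (le_update_true η u) hξ)]
      norm_num
    · have hju : j ≠ u := fun h => hN.ne (congrArg Subtype.val h).symm
      simp only [bondJump, if_pos hN, if_neg hjv, sub_zero]
      exact half_le_relJump_exch_update_sub hγ hA huv hu hv hξ hju hjv (hsp j hju hjv hN)
  · simp only [bondJump, if_neg hN, sub_self]
    split_ifs <;> norm_num

theorem bondJump_update_sub_ge_of_partner (hγ : ∀ i, 0 < γ i)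
    (hA : ∀ σ : Conf d n, σ ∈ A2 z' ↔ σ u = true ∧ σ v = true) (hγuv : γ u.1 = γ v.1)
    (huv : Nbr u.1 v.1) (hu : η u = false) (hv : η v = false) (hξ : update η u true ∉ A2 z')
    (hsp : ∀ j : Site d n, j ≠ u → j ≠ v → Nbr v.1 j.1 → 2 * γ v.1 ≤ γ j.1) (j : Site d n) :
    (if j = u then 1 / 2 else 0) - (if Nbr v.1 j.1 then 1 / 2 else 0) ≤
      bondJump γ z' (update η u true) v j - bondJump γ z' η v j := by
  have huv' : u ≠ v := fun h => huv.ne (congrArg Subtype.val h)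
  by_cases hN : Nbr v.1 j.1
  · by_cases hju : j = u
    · subst hju
      rw [bondJump_comm _ v, bondJump_comm η v]
      simp only [bondJump, if_pos huv, if_true, if_pos hN,
        relJump_exch_special hγ hA hγuv hξ,
        relJump_exch_special hγ hA hγuv (notMem_A2_of_le (le_update_true η j) hξ)]
      norm_num
    · have hjv : j ≠ v := fun h => hN.ne (congrArg Subtype.val h).symm
      simp only [bondJump, if_pos hN, if_neg hju, zero_sub]
      exact neg_half_le_relJump_exch_update_sub hγ hA huv' hu hv hξ hju (hsp j hju hjv hN)
  · have hju : j ≠ u := fun h => hN (h ▸ huv.symm)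
    simp [bondJump, hN, hju]

theorem bulkJump_le_update_of_special (hγ : ∀ i, 0 < γ i)
    (hA : ∀ σ : Conf d n, σ ∈ A2 z' ↔ σ u = true ∧ σ v = true) (hγuv : γ u.1 = γ v.1)
    (huv : Nbr u.1 v.1) (hu_int : ∀ j, Nbr u.1 j → j ∈ Lam d n)
    (hv_int : ∀ j, Nbr v.1 j → j ∈ Lam d n)
    (hsp : ∀ j : Site d n, j ≠ u → j ≠ v → (Nbr u.1 j.1 ∨ Nbr v.1 j.1) → 2 * γ u.1 ≤ γ j.1)
    (hu : η u = false) (hv : η v = false) (hξ : update η u true ∉ A2 z') :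
    bulkJump γ z' η ≤ bulkJump γ z' (update η u true) := by
  have huv' : u ≠ v := fun h => huv.ne (congrArg Subtype.val h)
  have hη := notMem_A2_of_le (le_update_true η u) hξ
  have hvfalse : ∀ σ : Conf d n, σ v = false → σ ∉ A2 z' := fun σ hσ => by simp [hA, hσ]
  have hS : ∀ i ∈ ({u, v} : Finset (Site d n)), ∀ j ∈ ({u, v} : Finset (Site d n)),
      bondJump γ z' (update η u true) i j - bondJump γ z' η i j = 0 := by
    have hbond : ∀ σ : Conf d n, σ ∉ A2 z' → bondJump γ z' σ u v = 0 := fun σ hσ => by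
      rw [bondJump, if_pos huv, relJump_exch_special hγ hA hγuv hσ]
    simp only [Finset.mem_insert, Finset.mem_singleton]
    rintro i (rfl | rfl) j (rfl | rfl)
    · simp [bondJump, nbr_irrefl]
    · rw [hbond _ hξ, hbond _ hη, sub_self]
    · rw [bondJump_comm _ i, bondJump_comm η i, hbond _ hξ, hbond _ hη, sub_self]
    · simp [bondJump, nbr_irrefl]
  have hSc : ∀ i ∉ ({u, v} : Finset (Site d n)), ∀ j ∉ ({u, v} : Finset (Site d n)),
      bondJump γ z' (update η u true) i j - bondJump γ z' η i j = 0 := by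
    simp only [Finset.mem_insert, Finset.mem_singleton, not_or]
    refine fun i hi j hj => sub_eq_zero.mpr (bondJump_update_of_ne hγ hu (Ne.symm hi.1)
      (Ne.symm hj.1) (iff_of_false (hvfalse _ ?_) (hvfalse _ ?_)))
    · rw [update_of_ne huv'.symm, exch_apply_of_ne (Ne.symm hi.2) (Ne.symm hj.2), hv]
    · rw [exch_apply_of_ne (Ne.symm hi.2) (Ne.symm hj.2), hv]
  -- bonds at `u` gain `1/2` each, bonds at `v` lose at most `1/2`, and both sites have `2d`
  -- neighbours; the bond `{u, v}` itself does not count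
  have hsum_u := Finset.sum_le_sum fun j (_ : j ∈ Finset.univ) =>
    bondJump_update_sub_ge_of_special hγ hA hγuv huv' hu hv hξ
      (fun j hju hjv hN => hsp j hju hjv (Or.inl hN)) j
  have hsum_v := Finset.sum_le_sum fun j (_ : j ∈ Finset.univ) =>
    bondJump_update_sub_ge_of_partner hγ hA hγuv huv hu hv hξ
      (fun j hju hjv hN => hγuv ▸ hsp j hju hjv (Or.inr hN)) j
  simp only [Finset.sum_sub_distrib, Finset.sum_ite_eq', Finset.mem_univ, if_true,
    sum_site_nbr_const hu_int, sum_site_nbr_const hv_int] at hsum_u hsum_v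
  rw [← sub_nonneg, bulkJump_sub, sum_sum_eq_two_nsmul_of_symm _ {u, v}
      (fun i j => by rw [bondJump_comm _ i, bondJump_comm η i]) hS hSc,
    Finset.sum_pair huv']
  simp only [Finset.sum_sub_distrib] at hsum_u hsum_v ⊢
  rw [two_nsmul]
  linarith

end Special

end Step

section Boundary

variable {γ : (Fin d → ℤ) → ℝ} {z' : Site d n} {η : Conf d n} {k : Site d n}

theorem kap_pos {ρ : ℝ} (hρ : ρ ∈ Set.Ioo (0 : ℝ) 1) : 0 < kap ρ :=
  Real.sqrt_pos.mpr (div_pos (sub_pos.mpr hρ.2) hρ.1)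

theorem bdRate_of_true (ρ : ℝ) {σ : Conf d n} {i : Site d n} (h : σ i = true) :
    bdRate ρ σ i = kap ρ := by
  simp [bdRate, h]

theorem bdRate_of_false (ρ : ℝ) {σ : Conf d n} {i : Site d n} (h : σ i = false) :
    bdRate ρ σ i = (kap ρ)⁻¹ := by
  simp [bdRate, h]

theorem flp_of_false (hk : η k = false) : flp k η = update η k true := by
  rw [flp_eq_update, hk, Bool.not_false]

theorem flp_update_true (hk : η k = false) : flp k (update η k true) = η := by
  rw [flp_eq_update, update_self, Bool.not_true, update_idem, ← hk, update_eq_self]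

theorem boundaryJump_update_sub (hγ : ∀ i, 0 < γ i) (ρ : ℝ) (hk0 : k ≠ site0 d n)
    (hkz : k ≠ z') (hk : η k = false) (hξ : update η k true ∉ A2 z') :
    boundaryJump ρ γ z' (update η k true) - boundaryJump ρ γ z' η =
      nOut k * (kap ρ * ((γ k.1)⁻¹ - 1) - (kap ρ)⁻¹ * (γ k.1 - 1)) := by
  have hη := notMem_A2_of_le (le_update_true η k) hξ
  have hw := (weight_pos hγ η).ne'
  have hadd : relJump γ z' η (flp k η) = γ k.1 - 1 := by
    rw [flp_of_false hk, relJump, psi_of_notMem hξ, weight_update_true hk, mul_div_assoc,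
      div_self hw, mul_one]
  have hremove : relJump γ z' (update η k true) (flp k (update η k true)) = (γ k.1)⁻¹ - 1 := by
    rw [flp_update_true hk, relJump, psi_of_notMem hη, weight_update_true hk,
      div_mul_cancel_right₀ hw]
  rw [boundaryJump, boundaryJump, ← Finset.sum_sub_distrib,
    Finset.sum_eq_single k (fun i _ hik => sub_eq_zero.mpr (boundaryTerm_update_of_ne hγ ρ hk
      (Ne.symm hik) (update_mem_A2_iff hk0 hkz _ _))) (fun h => absurd (Finset.mem_univ k) h),
    bdRate_of_true ρ (update_self k true η), bdRate_of_false ρ hk, hadd, hremove]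
  ring

theorem boundaryJump_update_of_special (hγ : ∀ i, 0 < γ i) (ρ : ℝ) {u v : Site d n}
    (hA : ∀ σ : Conf d n, σ ∈ A2 z' ↔ σ u = true ∧ σ v = true) (huv : u ≠ v)
    (hnu : nOut u = 0) (hnv : nOut v = 0) (hu : η u = false) (hv : η v = false) :
    boundaryJump ρ γ z' (update η u true) = boundaryJump ρ γ z' η := by
  refine Finset.sum_congr rfl fun i _ => ?_
  by_cases hiu : i = u
  · simp [hiu, hnu]
  by_cases hiv : i = v
  · simp [hiv, hnv]
  have hvfalse : ∀ σ : Conf d n, σ v = false → σ ∉ A2 z' := fun σ hσ => by simp [hA, hσ]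
  refine boundaryTerm_update_of_ne hγ ρ hu (Ne.symm hiu)
    (iff_of_false (hvfalse _ ?_) (hvfalse _ ?_))
  · rw [update_of_ne huv.symm, flp_apply_of_ne (Ne.symm hiv), hv]
  · rw [flp_apply_of_ne (Ne.symm hiv), hv]

end Boundary

section Monotone

variable {γ : (Fin d → ℤ) → ℝ} {z' : Site d n} {η : Conf d n} {k : Site d n}

theorem potential_sub (hγ : ∀ i, 0 < γ i) (hγz' : γ z'.1 = γ 0) (ρ β : ℝ) {ξ : Conf d n}
    (hη : η ∉ A2 z') (hξ : ξ ∉ A2 z') :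
    potential ρ β γ z' ξ - potential ρ β γ z' η =
      (bulkJump γ z' ξ - bulkJump γ z' η) / 2 +
        (boundaryJump ρ γ z' ξ - boundaryJump ρ γ z' η) := by
  rw [potential, potential, relJump_exch_special hγ (fun _ => Iff.rfl) hγz'.symm hη,
    relJump_exch_special hγ (fun _ => Iff.rfl) hγz'.symm hξ]
  ring

theorem potential_le_update_of_ne (hγ : ∀ i, 0 < γ i) (hγ1 : ∀ i, γ i ≤ 1)
    (hγz' : γ z'.1 = γ 0) (hout : ∀ j ∉ Lam d n, γ j = 1) {ρ : ℝ} (hρ : ρ ∈ Set.Ioo (0 : ℝ) 1)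
    (β : ℝ) (hk0 : k ≠ site0 d n) (hkz : k ≠ z')
    (hharm : 2 * d * (γ k.1)⁻¹ = ∑ j ∈ nbrFinset k.1, (γ j)⁻¹)
    (hsp : ∀ j : Site d n, Nbr k.1 j.1 → (j = site0 d n ∨ j = z') → 2 * γ j.1 ≤ γ k.1)
    (hk : η k = false) (hξ : update η k true ∉ A2 z') :
    potential ρ β γ z' η ≤ potential ρ β γ z' (update η k true) := by
  have hbulk := bulkJump_update_sub_ge hγ hk0 hkz hk hξ hsp
  rw [sum_site_nbr_one_sub_div (hγ k.1).ne' hout hharm] at hbulk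
  have hnOut : (0 : ℝ) ≤ nOut k := by rw [nOut_eq_card]; positivity
  have hgain := mul_le_mul_of_nonneg_left
    (one_sub_le_mul_inv_sub_one_sub_inv_mul (kap_pos hρ) (hγ k.1) (hγ1 k.1)) hnOut
  rw [← sub_nonneg, potential_sub hγ hγz' ρ β (notMem_A2_of_le (le_update_true η k) hξ) hξ,
    boundaryJump_update_sub hγ ρ hk0 hkz hk hξ]
  linarith

theorem potential_le_update_of_special (hγ : ∀ i, 0 < γ i) (hγz' : γ z'.1 = γ 0) (ρ β : ℝ)
    {u v : Site d n} (hA : ∀ σ : Conf d n, σ ∈ A2 z' ↔ σ u = true ∧ σ v = true)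
    (hγuv : γ u.1 = γ v.1) (huv : Nbr u.1 v.1) (hu_int : ∀ j, Nbr u.1 j → j ∈ Lam d n)
    (hv_int : ∀ j, Nbr v.1 j → j ∈ Lam d n)
    (hsp : ∀ j : Site d n, j ≠ u → j ≠ v → (Nbr u.1 j.1 ∨ Nbr v.1 j.1) → 2 * γ u.1 ≤ γ j.1)
    (hu : η u = false) (hξ : update η u true ∉ A2 z') :
    potential ρ β γ z' η ≤ potential ρ β γ z' (update η u true) := by
  have huv' : u ≠ v := fun h => huv.ne (congrArg Subtype.val h)
  have hv := apply_eq_false_of_update_notMem hA huv' hξ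
  rw [← sub_nonneg, potential_sub hγ hγz' ρ β (notMem_A2_of_le (le_update_true η u) hξ) hξ,
    boundaryJump_update_of_special hγ ρ hA huv' (nOut_eq_zero hu_int) (nOut_eq_zero hv_int) hu hv]
  linarith [bulkJump_le_update_of_special hγ hA hγuv huv hu_int hv_int hsp hu hv hξ]

theorem potential_monotoneOn (hn : 2 ≤ n) (hz' : Nbr (0 : Fin d → ℤ) z'.1)
    (hγ : ∀ i, 0 < γ i) (hγ1 : ∀ i, γ i ≤ 1) (hγz' : γ z'.1 = γ 0)
    (hout : ∀ j ∉ Lam d n, γ j = 1)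
    (hharm : ∀ i ∈ Lam d n, i ≠ 0 → i ≠ z'.1 →
      2 * d * (γ i)⁻¹ = ∑ j ∈ nbrFinset i, (γ j)⁻¹)
    (hsp : ∀ k : Fin d → ℤ, k ≠ 0 → k ≠ z'.1 →
      (Nbr (0 : Fin d → ℤ) k ∨ Nbr z'.1 k) → 2 * γ 0 ≤ γ k)
    {ρ : ℝ} (hρ : ρ ∈ Set.Ioo (0 : ℝ) 1) (β : ℝ) :
    MonotoneOn (potential ρ β γ z') (A2 z')ᶜ := by
  refine monotoneOn_of_le_update (isUpperSet_A2 z').compl fun η k hk hξ => ?_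
  have h0_int : ∀ j, Nbr (site0 d n).1 j → j ∈ Lam d n :=
    fun j => Nbr.mem_Lam hn (by simp [site0])
  have hz_int : ∀ j, Nbr z'.1 j → j ∈ Lam d n :=
    fun j => Nbr.mem_Lam hn fun m => by simpa using hz'.abs_sub_le_one m
  have hsp' : ∀ j : Site d n, j ≠ site0 d n → j ≠ z' →
      (Nbr (site0 d n).1 j.1 ∨ Nbr z'.1 j.1) → 2 * γ 0 ≤ γ j.1 :=
    fun j hj0 hjz => hsp j.1 (fun h => hj0 (Subtype.ext h)) (fun h => hjz (Subtype.ext h))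
  by_cases hk0 : k = site0 d n
  · subst hk0
    exact potential_le_update_of_special hγ hγz' ρ β (fun _ => Iff.rfl) hγz'.symm hz' h0_int
      hz_int hsp' hk hξ
  by_cases hkz : k = z'
  · subst hkz
    exact potential_le_update_of_special hγ hγz' ρ β (fun _ => and_comm) hγz' hz'.symm hz_int
      h0_int (fun j hjz hj0 hN => hγz' ▸ hsp' j hj0 hjz hN.symm) hk hξ
  have hk0' : k.1 ≠ 0 := fun h => hk0 (Subtype.ext h)
  have hkz' : k.1 ≠ z'.1 := fun h => hkz (Subtype.ext h)
  refine potential_le_update_of_ne hγ hγ1 hγz' hout hρ β hk0 hkz (hharm k.1 k.2 hk0' hkz')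
    (fun j hkj hj => ?_) hk hξ
  rcases hj with rfl | rfl
  · exact hsp k.1 hk0' hkz' (Or.inl hkj.symm)
  · exact hγz' ▸ hsp k.1 hk0' hkz' (Or.inr hkj.symm)

end Monotone

section Gam

variable {C : ℝ} {h : (Fin d → ℤ) → ℝ}

theorem gam_pos (hC : 0 ≤ C) {i : Fin d → ℤ} (hi : 0 ≤ h i) : 0 < gam C h i := by
  unfold gam
  positivity

theorem gam_le_one (hC : 0 ≤ C) {i : Fin d → ℤ} (hi : 0 ≤ h i) : gam C h i ≤ 1 := by
  rw [gam, div_le_one (by positivity)]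
  exact le_add_of_nonneg_right (mul_nonneg hC hi)

theorem inv_gam (i : Fin d → ℤ) : (gam C h i)⁻¹ = 1 + C * h i := by
  rw [gam, one_div, inv_inv]

theorem inv_gam_harmonic {i : Fin d → ℤ} (hi : 2 * (d : ℝ) * h i = ∑ j ∈ nbrFinset i, h j) :
    2 * d * (gam C h i)⁻¹ = ∑ j ∈ nbrFinset i, (gam C h j)⁻¹ := by
  simp only [inv_gam, Finset.sum_add_distrib, ← Finset.mul_sum, ← hi, Finset.sum_const,
    card_nbrFinset, nsmul_eq_mul]
  push_cast
  ring

theorem two_mul_gam_le (hC : 0 ≤ C) (h0 : h 0 = 1) {k : Fin d → ℤ} (hk : 0 ≤ h k)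
    (hk2 : 2 * (1 + C * h k) ≤ 1 + C) : 2 * gam C h 0 ≤ gam C h k := by
  rw [gam, gam, h0, mul_one, mul_one_div, div_le_div_iff₀ (by positivity) (by positivity)]
  linarith

end Gam

end SSEP

theorem potential_increasing_A2_general
    {d n : ℕ} (hn : 2 ≤ n)
    (ρ : ℝ) (hρ : ρ ∈ Set.Ioo (0 : ℝ) 1)
    (z' : Site d n) (hz' : Nbr (0 : Fin d → ℤ) z'.1)
    (h : (Fin d → ℤ) → ℝ)
    (h01 : ∀ i, h i ∈ Set.Icc (0 : ℝ) 1)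
    (h0 : h 0 = 1) (h0' : h z'.1 = 1)
    (hout : ∀ i ∉ Lam d n, h i = 0)
    (hharm : ∀ i ∈ Lam d n, i ≠ 0 → i ≠ z'.1 →
      2 * (d : ℝ) * h i = ∑ j ∈ nbrFinset i, h j)
    (C : ℝ) (hC : 0 < C)
    (hC2 : ∀ k : Fin d → ℤ, k ≠ 0 → k ≠ z'.1 →
      (Nbr (0 : Fin d → ℤ) k ∨ Nbr z'.1 k) → 2 * (1 + C * h k) ≤ 1 + C)
    (β : ℝ) :
    ∀ η ζ : Conf d n, η ≤ ζ →
      ¬(η (site0 d n) = true ∧ η z' = true) → ¬(ζ (site0 d n) = true ∧ ζ z' = true) →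
      Lbeta ρ β z' (psiTwo C h z') η / psiTwo C h z' η ≤
        Lbeta ρ β z' (psiTwo C h z') ζ / psiTwo C h z' ζ := by
  have hγ : ∀ i, 0 < gam C h i := fun i => SSEP.gam_pos hC.le (h01 i).1
  intro η ζ hle hη hζ
  rw [SSEP.psiTwo_eq_psi, SSEP.Lbeta_psi_div_psi hγ ρ β hη, SSEP.Lbeta_psi_div_psi hγ ρ β hζ]
  refine SSEP.potential_monotoneOn hn hz' hγ (fun i => SSEP.gam_le_one hC.le (h01 i).1)
    (by simp only [gam, h0, h0']) (fun j hj => by simp [gam, hout j hj])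
    (fun i hi hi0 hiz => SSEP.inv_gam_harmonic (hharm i hi hi0 hiz))
    (fun k hk0 hkz hk => SSEP.two_mul_gam_le hC.le h0 (h01 k).1 (hC2 k hk0 hkz hk)) hρ β hη hζ hle

/-- **Key step in the proof of Proposition 1.4.**  For `A₂ = {η : η(0) = η(0') = 1}`,
if `2(1 + C h(k)) ≤ 1 + C` for every `k ∉ {0,0'}` with `k ∼ 0` or `k ∼ 0'`, then for
every `β > 0` the function `V = L_β^{n,ρ}ψ/ψ` is increasing on `A₂^c`. -/
theorem potential_increasing_A2
    {d n : ℕ} (hd : 1 ≤ d) (hn : 2 ≤ n)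
    (ρ : ℝ) (hρ : ρ ∈ Set.Ioo (0 : ℝ) 1)
    (z' : Site d n) (hz' : Nbr (0 : Fin d → ℤ) z'.1)
    (h : (Fin d → ℤ) → ℝ)
    (h01 : ∀ i, h i ∈ Set.Icc (0 : ℝ) 1)
    (h0 : h 0 = 1) (h0' : h z'.1 = 1)
    (hout : ∀ i ∉ Lam d n, h i = 0)
    (hharm : ∀ i ∈ Lam d n, i ≠ 0 → i ≠ z'.1 →
      2 * (d : ℝ) * h i = ∑ j ∈ nbrFinset i, h j)
    (C : ℝ) (hC : 0 < C)
    (hC2 : ∀ k : Fin d → ℤ, k ≠ 0 → k ≠ z'.1 →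
      (Nbr (0 : Fin d → ℤ) k ∨ Nbr z'.1 k) → 2 * (1 + C * h k) ≤ 1 + C)
    (β : ℝ) (hβ : 0 < β) :
    ∀ η ζ : Conf d n, η ≤ ζ →
      ¬(η (site0 d n) = true ∧ η z' = true) → ¬(ζ (site0 d n) = true ∧ ζ z' = true) →
      Lbeta ρ β z' (psiTwo C h z') η / psiTwo C h z' η ≤
        Lbeta ρ β z' (psiTwo C h z') ζ / psiTwo C h z' ζ :=
  potential_increasing_A2_general hn ρ hρ z' hz' h h01 h0 h0' hout hharm C hC hC2 β
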